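/- arXiv:1211.1079 — 5 statements merged into one kernel-verified Lean document; each statement's English description precedes it below -/
import Mathlib

section
/- Let A be an m×N matrix with rational entries, let C = {x ∈ ℝ^N : x_i ≥ 0 for all i and Ax = 0}, and let f : ℝ^N → ℝ be a linear functional. Suppose v ∈ C satisfies f(v) > 0, and that there is no integer vector w ∈ C ∩ ℤ^N with f(w) > 0 whose support is strictly contained in the support of v. Then v lies on an extreme ray of C; that is, whenever v = a + b with a, b ∈ C, both a and b are nonnegative real scalar multiples of v. -/
/-!
Let `v = a + b` in the cone `C`. Then `supp a ⊆ supp v`, and `v - t • a`, for the largest `t`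
keeping it nonnegative, lies in `C` with support strictly inside `supp v`; so it suffices that `0`
is the only such vector of `C`, for then `v = t • a`. A nonzero such `y` yields a vector of `C`
with `f > 0` and support strictly inside `supp v`: `y` itself if `f y > 0`, and otherwise
`v - t • y`, since `f v - t * f y ≥ f v > 0`.

Such a vector `x` is approximated by integer vectors with the same properties. Write `x = Q c`
with `Q` rational and the entries of `c` linearly independent over `ℚ`; then `A Q = 0` and the
rows of `Q` vanish where `x` does. For rational `t` near `c`, `Q t` is a rational point of `C`
that is still positive on `supp x` and under `f`, and clearing its denominators gives an integer
vector that the hypothesis excludes.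
-/

open Function Matrix

def solutionCone {ι κ : Type*} [Fintype ι] (A : Matrix κ ι ℚ) : Set (ι → ℝ) :=
  {x | (∀ i, 0 ≤ x i) ∧ (A.map ((↑) : ℚ → ℝ)).mulVec x = 0}

section RationalPoints

variable {ι κ d : Type*} [Fintype ι] [Fintype d]

theorem eq_zero_of_dotProduct_eq_zero_of_linearIndependent {c : d → ℝ}
    (hc : LinearIndependent ℚ c) {g : d → ℚ} (hg : (fun l => (g l : ℝ)) ⬝ᵥ c = 0) : g = 0 := by
  funext l
  refine Fintype.linearIndependent_iff.mp hc g ?_ l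
  simpa [dotProduct, Rat.smul_def] using hg

theorem eq_zero_of_mulVec_eq_zero_of_linearIndependent {c : d → ℝ}
    (hc : LinearIndependent ℚ c) {B : Matrix κ d ℚ} (hB : (B.map ((↑) : ℚ → ℝ)) *ᵥ c = 0) :
    B = 0 := by
  ext r l
  exact congrFun (eq_zero_of_dotProduct_eq_zero_of_linearIndependent hc (congrFun hB r)) l

theorem exists_rat_matrix_mulVec_eq (x : ι → ℝ) :
    ∃ (n : ℕ) (Q : Matrix ι (Fin n) ℚ) (c : Fin n → ℝ),
      LinearIndependent ℚ c ∧ (Q.map ((↑) : ℚ → ℝ)) *ᵥ c = x := by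
  let V := Submodule.span ℚ (Set.range x)
  have : FiniteDimensional ℚ V := FiniteDimensional.span_of_finite ℚ (Set.finite_range x)
  let b := Module.finBasis ℚ V
  have hxV : ∀ i, x i ∈ V := fun i => Submodule.subset_span ⟨i, rfl⟩
  refine ⟨_, Matrix.of fun i l => b.repr ⟨x i, hxV i⟩ l, fun l => b l,
    b.linearIndependent.map' V.subtype V.ker_subtype, ?_⟩
  funext i
  have hsum := congrArg Subtype.val (b.sum_repr ⟨x i, hxV i⟩)
  simp only [Submodule.coe_sum, Submodule.coe_smul] at hsum
  conv_rhs => rw [← hsum]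
  simp [mulVec, dotProduct, Rat.smul_def]

theorem exists_rat_mem_ker_of_isOpen (A : Matrix κ ι ℚ) {x : ι → ℝ}
    (hx : (A.map ((↑) : ℚ → ℝ)) *ᵥ x = 0) {U : Set (ι → ℝ)} (hU : IsOpen U) (hxU : x ∈ U) :
    ∃ q : ι → ℚ, A *ᵥ q = 0 ∧ (fun i => (q i : ℝ)) ∈ U ∧ support q ⊆ support x := by
  obtain ⟨n, Q, c, hc, rfl⟩ := exists_rat_matrix_mulVec_eq x
  have hAQ : A * Q = 0 := by
    refine eq_zero_of_mulVec_eq_zero_of_linearIndependent hc ?_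
    have hcast : (A * Q).map ((↑) : ℚ → ℝ) = A.map ((↑) : ℚ → ℝ) * Q.map ((↑) : ℚ → ℝ) :=
      Matrix.map_mul (f := Rat.castHom ℝ)
    rwa [hcast, ← mulVec_mulVec]
  obtain ⟨t, ht⟩ := (DenseRange.piMap fun _ => Rat.denseRange_cast).exists_mem_open
    (hU.preimage (Q.map ((↑) : ℚ → ℝ)).mulVecLin.continuous_of_finiteDimensional) ⟨c, hxU⟩
  refine ⟨Q *ᵥ t, by rw [mulVec_mulVec, hAQ, zero_mulVec], ?_, fun i hi hxi => hi ?_⟩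
  · rw [Set.mem_preimage, mulVecLin_apply] at ht
    convert ht using 1
    funext i
    exact RingHom.map_mulVec (Rat.castHom ℝ) Q t i
  · have hrow : Q i = 0 := eq_zero_of_dotProduct_eq_zero_of_linearIndependent hc hxi
    simp [mulVec, hrow]

theorem exists_nat_mul_eq_int (q : ι → ℚ) :
    ∃ n : ℕ, 0 < n ∧ ∀ i, ∃ z : ℤ, (n : ℚ) * q i = z := by
  refine ⟨∏ i, (q i).den, Finset.prod_pos fun i _ => (q i).pos, fun i => ?_⟩
  obtain ⟨k, hk⟩ := Finset.dvd_prod_of_mem (fun i => (q i).den) (Finset.mem_univ i)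
  refine ⟨k * (q i).num, ?_⟩
  rw [hk]
  push_cast
  rw [mul_right_comm, Rat.den_mul_eq_num, mul_comm]

end RationalPoints

theorem exists_int_mem_solutionCone {ι κ : Type*} [Fintype ι] (A : Matrix κ ι ℚ)
    (f : (ι → ℝ) →ₗ[ℝ] ℝ) {x : ι → ℝ} (hx : x ∈ solutionCone A) (hfx : 0 < f x) :
    ∃ w ∈ solutionCone A, (∀ i, ∃ z : ℤ, w i = z) ∧ 0 < f w ∧ support w ⊆ support x := by
  let U : Set (ι → ℝ) := {y | 0 < f y} ∩ ⋂ i ∈ support x, {y | 0 < y i}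
  have hU : IsOpen U :=
    (isOpen_lt continuous_const f.continuous_of_finiteDimensional).inter <|
      (Set.toFinite _).isOpen_biInter fun i _ => isOpen_lt continuous_const (continuous_apply i)
  have hxU : x ∈ U := ⟨hfx, Set.mem_iInter₂.mpr fun i hi => (hx.1 i).lt_of_ne' hi⟩
  obtain ⟨q, hqA, ⟨hfq, hqpos⟩, hqx⟩ := exists_rat_mem_ker_of_isOpen A hx.2 hU hxU
  rw [Set.mem_iInter₂] at hqpos
  obtain ⟨n, hn, hnq⟩ := exists_nat_mul_eq_int q
  have hq_zero : ∀ i, x i = 0 → q i = 0 := fun i hi => notMem_support.mp fun h => hqx h hi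
  have hq_nonneg : ∀ i, (0 : ℝ) ≤ q i := fun i => by
    by_cases hi : x i = 0
    · simp [hq_zero i hi]
    · exact (hqpos i hi).le
  have hAq : (A.map ((↑) : ℚ → ℝ)) *ᵥ (fun i => (q i : ℝ)) = 0 := by
    funext r
    simpa [hqA, Function.comp_def] using (RingHom.map_mulVec (Rat.castHom ℝ) A q r).symm
  refine ⟨(n : ℝ) • fun i => (q i : ℝ), ⟨fun i => ?_, ?_⟩, fun i => ?_, ?_, fun i hi hxi => ?_⟩
  · exact mul_nonneg n.cast_nonneg (hq_nonneg i)
  · rw [mulVec_smul, hAq, smul_zero]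
  · obtain ⟨z, hz⟩ := hnq i
    exact ⟨z, by simp only [Pi.smul_apply, smul_eq_mul]; exact_mod_cast hz⟩
  · rw [map_smul, smul_eq_mul]
    exact mul_pos (Nat.cast_pos.mpr hn) hfq
  · simp [hq_zero i hxi] at hi

theorem exists_pos_sub_smul_support_ssubset {ι : Type*} [Finite ι] {v y : ι → ℝ} (hv : 0 ≤ v)
    (hy : 0 ≤ y) (hy0 : y ≠ 0) (hyv : support y ⊆ support v) :
    ∃ t : ℝ, 0 < t ∧ 0 ≤ v - t • y ∧ support (v - t • y) ⊂ support v := by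
  obtain ⟨i₀, hi₀, hi₀_le⟩ := Set.exists_min_image (support y) (fun i => v i / y i)
    (Set.toFinite _) (support_nonempty_iff.mpr hy0)
  have hpos : ∀ i ∈ support y, 0 < y i ∧ 0 < v i := fun i hi =>
    ⟨(hy i).lt_of_ne' hi, (hv i).lt_of_ne' (hyv hi)⟩
  refine ⟨v i₀ / y i₀, div_pos (hpos i₀ hi₀).2 (hpos i₀ hi₀).1, fun i => ?_,
    (Set.ssubset_iff_of_subset fun i hi hvi => ?_).mpr ⟨i₀, hyv hi₀, ?_⟩⟩
  · by_cases hi : y i = 0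
    · simpa [hi] using hv i
    · have := (le_div_iff₀ (hpos i hi).1).mp (hi₀_le i hi)
      simp only [Pi.zero_apply, Pi.sub_apply, Pi.smul_apply, smul_eq_mul]
      linarith
  · have : y i = 0 := notMem_support.mp fun h => hyv h hvi
    simp [hvi, this] at hi
  · simp [div_mul_cancel₀ _ (hpos i₀ hi₀).1.ne']

section ExtremeRay

variable {ι κ : Type*} [Fintype ι] {A : Matrix κ ι ℚ} {f : (ι → ℝ) →ₗ[ℝ] ℝ} {v : ι → ℝ}

theorem sub_smul_mem_solutionCone {y : ι → ℝ} {t : ℝ} (hv : v ∈ solutionCone A)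
    (hy : y ∈ solutionCone A) (h : 0 ≤ v - t • y) : v - t • y ∈ solutionCone A :=
  ⟨h, by rw [mulVec_sub, mulVec_smul, hv.2, hy.2, smul_zero, sub_zero]⟩

theorem not_support_ssubset_of_pos
    (hmin : ∀ w ∈ solutionCone A, (∀ i, ∃ z : ℤ, w i = z) → 0 < f w → ¬support w ⊂ support v)
    {y : ι → ℝ} (hy : y ∈ solutionCone A) (hfy : 0 < f y) : ¬support y ⊂ support v := by
  intro hyv
  obtain ⟨w, hw, hwz, hfw, hwy⟩ := exists_int_mem_solutionCone A f hy hfy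
  exact hmin w hw hwz hfw (hwy.trans_ssubset hyv)

theorem eq_zero_of_support_ssubset
    (hmin : ∀ w ∈ solutionCone A, (∀ i, ∃ z : ℤ, w i = z) → 0 < f w → ¬support w ⊂ support v)
    (hv : v ∈ solutionCone A) (hfv : 0 < f v) {y : ι → ℝ} (hy : y ∈ solutionCone A)
    (hyv : support y ⊂ support v) : y = 0 := by
  by_contra hy0
  rcases lt_or_ge 0 (f y) with hfy | hfy
  · exact not_support_ssubset_of_pos hmin hy hfy hyv
  obtain ⟨t, ht, hnonneg, hss⟩ := exists_pos_sub_smul_support_ssubset hv.1 hy.1 hy0 hyv.subset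
  refine not_support_ssubset_of_pos hmin (sub_smul_mem_solutionCone hv hy hnonneg) ?_ hss
  rw [map_sub, map_smul, smul_eq_mul]
  nlinarith

theorem exists_nonneg_smul_eq_of_le
    (hmin : ∀ w ∈ solutionCone A, (∀ i, ∃ z : ℤ, w i = z) → 0 < f w → ¬support w ⊂ support v)
    (hv : v ∈ solutionCone A) (hfv : 0 < f v) {a : ι → ℝ} (ha : a ∈ solutionCone A)
    (hav : a ≤ v) : ∃ μ : ℝ, 0 ≤ μ ∧ a = μ • v := by
  by_cases ha0 : a = 0
  · exact ⟨0, le_rfl, by simp [ha0]⟩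
  have hsupp : support a ⊆ support v := fun i hi hvi =>
    hi (le_antisymm (hvi ▸ hav i) (ha.1 i))
  obtain ⟨t, ht, hnonneg, hss⟩ := exists_pos_sub_smul_support_ssubset hv.1 ha.1 ha0 hsupp
  have hvta : v - t • a = 0 :=
    eq_zero_of_support_ssubset hmin hv hfv (sub_smul_mem_solutionCone hv ha hnonneg) hss
  refine ⟨t⁻¹, inv_nonneg.mpr ht.le, ?_⟩
  rw [sub_eq_zero.mp hvta, smul_smul, inv_mul_cancel₀ ht.ne', one_smul]

end ExtremeRay

/-- If `v` lies in the cone `C = {x : x ≥ 0, Ax = 0}`, has `f v > 0`,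
and no integer vector `w ∈ C` with `f w > 0` has support strictly contained in the
support of `v`, then `v` lies on an extreme ray of `C`. -/
theorem stmt_0 {m N : ℕ} (A : Matrix (Fin m) (Fin N) ℚ)
    (C : Set (Fin N → ℝ))
    (hC : C = {x | (∀ i, 0 ≤ x i) ∧ (A.map ((↑) : ℚ → ℝ)).mulVec x = 0})
    (f : (Fin N → ℝ) →ₗ[ℝ] ℝ)
    (v : Fin N → ℝ) (hv : v ∈ C) (hfv : 0 < f v)
    (hmin : ¬ ∃ w : Fin N → ℝ, w ∈ C ∧ (∀ i, ∃ z : ℤ, w i = (z : ℝ)) ∧ 0 < f w ∧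
      {i | w i ≠ 0} ⊂ {i | v i ≠ 0}) :
    ∀ a b : Fin N → ℝ, a ∈ C → b ∈ C → v = a + b →
      (∃ μ : ℝ, 0 ≤ μ ∧ a = μ • v) ∧ (∃ ν : ℝ, 0 ≤ ν ∧ b = ν • v) := by
  subst hC
  intro a b ha hb hab
  have hmin' : ∀ w ∈ solutionCone A, (∀ i, ∃ z : ℤ, w i = z) → 0 < f w →
      ¬support w ⊂ support v := fun w hw hwz hfw hwv => hmin ⟨w, hw, hwz, hfw, hwv⟩
  have hav : a ≤ v := hab ▸ le_add_of_nonneg_right hb.1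
  have hbv : b ≤ v := hab ▸ le_add_of_nonneg_left ha.1
  exact ⟨exists_nonneg_smul_eq_of_le hmin' hv hfv ha hav,
    exists_nonneg_smul_eq_of_le hmin' hv hfv hb hbv⟩
end

section
/- Let A be an m×N matrix with rational entries, let C = {x ∈ ℝ^N : x_i ≥ 0 for all i and Ax = 0}, and let f : ℝ^N → ℝ be a linear functional. Suppose v ∈ C ∩ ℤ^N is a nonzero integer vector with f(v) > 0, and that there is no integer vector w ∈ C ∩ ℤ^N with f(w) > 0 whose support is strictly contained in the support of v. Let d be the greatest common divisor of the coordinates of v and let u = (1/d)·v (the smallest positive rational multiple of v all of whose coordinates are integers). Then u ∈ C ∩ ℤ^N, f(u) > 0, and u cannot be written as u = x + y with x, y ∈ C ∩ ℤ^N both nonzero. -/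
/-!
Write `u = x + y`. Both summands are supported inside `supp v`, and the key point is that any
nonzero integer point `w` of the cone with `supp w ⊆ supp v` is a rational multiple of `v`.
Indeed, subtracting from `v` the largest multiple `λ w` that keeps it in the cone kills a
coordinate; by minimality the remainder has `f ≤ 0`, which forces `f w > 0` and then, again by
minimality, `supp w = supp v`. Subtracting from `w` the largest multiple of `v` now leaves a point
of the cone with strictly smaller support, which must be `0`. As `u` is primitive, an integer
point that is a positive rational multiple of `u` is `k u` with `k ≥ 1`; so `x = k u` and
`y = l u` with `k, l ≥ 1`, contradicting `x + y = u`.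
-/

open Function

section

variable {ι : Type*}

/-- `p / q = a j / b j` is the largest `λ` with `a - λ b ≥ 0`. -/
theorem exists_smul_sub_smul_nonneg_support_ssubset [Finite ι] {a b : ι → ℤ}
    (ha : 0 ≤ a) (hb : 0 ≤ b) (hb0 : b ≠ 0) (hba : support b ⊆ support a) :
    ∃ p q : ℤ, 0 < p ∧ 0 < q ∧ 0 ≤ q • a - p • b ∧ support (q • a - p • b) ⊂ support a := by
  obtain ⟨j, hj, hjmin⟩ := (support b).exists_min_image (fun i => (a i : ℚ) / b i)
    (support b).toFinite (support_nonempty_iff.2 hb0)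
  have hbj : 0 < b j := (hb j).lt_of_ne' hj
  have haj : 0 < a j := (ha j).lt_of_ne' (hba hj)
  refine ⟨a j, b j, haj, hbj, fun i => ?_, ?_⟩
  · by_cases hi : b i = 0
    · simpa [hi] using mul_nonneg hbj.le (ha i)
    · have hbi : 0 < b i := (hb i).lt_of_ne' hi
      have hratio := hjmin i hi
      rw [div_le_div_iff₀ (by exact_mod_cast hbj) (by exact_mod_cast hbi)] at hratio
      simp only [Pi.sub_apply, Pi.smul_apply, smul_eq_mul, Pi.zero_apply, sub_nonneg]
      exact_mod_cast (by linarith : (a j : ℚ) * b i ≤ b j * a i)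
  · refine LE.le.ssubset_of_mem_notMem (a := j) (fun i hi => ?_) (hba hj) (by simp [mul_comm])
    contrapose! hi
    have hai : a i = 0 := notMem_support.1 hi
    have hbi : b i = 0 := notMem_support.1 (mt (@hba i) hi)
    simp [hai, hbi]

theorem support_subset_of_nonneg_of_le {M : Type*} [Zero M] [PartialOrder M] {x v : ι → M}
    (hx0 : 0 ≤ x) (hxv : x ≤ v) : support x ⊆ support v :=
  fun i hi hvi => hi (((hxv i).trans_eq hvi).antisymm (hx0 i))

theorem exists_eq_smul_of_smul_eq_smul [Fintype ι] {u w : ι → ℤ}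
    (hu : Finset.univ.gcd (fun i => (u i).natAbs) = 1) {p q : ℤ} (hq : q ≠ 0)
    (h : q • w = p • u) : ∃ k, p = q * k ∧ w = k • u := by
  have hqp : q ∣ p := by
    rw [← Int.natAbs_dvd_natAbs, ← mul_one p.natAbs, ← hu, ← normalize_eq p.natAbs,
      ← Finset.gcd_mul_left]
    refine Finset.dvd_gcd fun i _ => ?_
    rw [← Int.natAbs_mul, Int.natAbs_dvd_natAbs]
    exact ⟨w i, by simpa using (congrFun h i).symm⟩
  obtain ⟨k, rfl⟩ := hqp
  exact ⟨k, rfl, smul_right_injective _ hq (by rwa [mul_smul] at h)⟩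

theorem exists_eq_gcd_natAbs_smul [Fintype ι] {v : ι → ℤ} (hv : v ≠ 0) :
    ∃ u : ι → ℤ, v = ((Finset.univ.gcd (fun i => (v i).natAbs) : ℕ) : ℤ) • u ∧
      Finset.univ.gcd (fun i => (u i).natAbs) = 1 := by
  obtain ⟨d, hd⟩ : ∃ d, Finset.univ.gcd (fun i => (v i).natAbs) = d := ⟨_, rfl⟩
  rw [hd]
  have hdvd (i : ι) : (d : ℤ) ∣ v i := Int.natCast_dvd.2 (hd ▸ Finset.gcd_dvd (Finset.mem_univ i))
  choose u hu using hdvd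
  have hd0 : d ≠ 0 := fun hd0 => hv <| funext fun i => by simp [hu i, hd0]
  refine ⟨u, funext fun i => (hu i).trans (smul_eq_mul ..).symm, (mul_eq_left₀ hd0).1 ?_⟩
  calc d * Finset.univ.gcd (fun i => (u i).natAbs)
      = Finset.univ.gcd (fun i => (v i).natAbs) := by
        simp_rw [hu, Int.natAbs_mul, Int.natAbs_natCast, Finset.gcd_mul_left, normalize_eq]
    _ = d := hd

theorem exists_eq_intCast {x : ι → ℝ} (hx : ∀ i, ∃ z : ℤ, x i = z) :
    ∃ X : ι → ℤ, x = fun i => (X i : ℝ) :=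
  ⟨fun i => (hx i).choose, funext fun i => (hx i).choose_spec⟩

theorem intCast_mem_cone_iff {κ : Type*} [Fintype ι] (B : Matrix κ ι ℝ) (w : ι → ℤ) :
    (fun i => (w i : ℝ)) ∈ {x | (∀ i, 0 ≤ x i) ∧ B.mulVec x = 0} ↔
      0 ≤ w ∧ w ∈ (B.mulVecLin.toAddMonoidHom.comp ((Int.castAddHom ℝ).compLeft ι)).ker :=
  and_congr (forall_congr' fun _ => Int.cast_nonneg_iff) Iff.rfl

theorem smul_mem_cone {κ : Type*} [Fintype ι] {B : Matrix κ ι ℝ} {c : ℝ} (hc : 0 ≤ c)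
    {x : ι → ℝ} (hx : x ∈ {x | (∀ i, 0 ≤ x i) ∧ B.mulVec x = 0}) :
    c • x ∈ {x | (∀ i, 0 ≤ x i) ∧ B.mulVec x = 0} :=
  ⟨fun i => mul_nonneg hc (hx.1 i), by rw [Matrix.mulVec_smul, hx.2, smul_zero]⟩

variable {R : Type*} [AddCommGroup R] [LinearOrder R] [IsOrderedAddMonoid R]

def HasMinimalPositiveSupport (L : AddSubgroup (ι → ℤ)) (g : (ι → ℤ) →+ R) (v : ι → ℤ) :
    Prop :=
  ∀ w ∈ L, 0 ≤ w → 0 < g w → ¬ support w ⊂ support v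

variable {L : AddSubgroup (ι → ℤ)} {g : (ι → ℤ) →+ R} {v : ι → ℤ}

theorem HasMinimalPositiveSupport.support_eq [Finite ι] (hmin : HasMinimalPositiveSupport L g v)
    (hv : v ∈ L) (hv0 : 0 ≤ v) (hgv : 0 < g v) {w : ι → ℤ} (hw : w ∈ L) (hw0 : 0 ≤ w)
    (hwne : w ≠ 0) (hwv : support w ⊆ support v) :
    support w = support v := by
  by_contra hne
  obtain ⟨p, q, hp, hq, hz0, hzv⟩ := exists_smul_sub_smul_nonneg_support_ssubset hv0 hw0 hwne hwv
  have hgw : g w ≤ 0 := not_lt.1 fun hgw => hmin w hw hw0 hgw (hwv.ssubset_of_ne hne)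
  refine hmin _ (L.sub_mem (L.zsmul_mem hv q) (L.zsmul_mem hw p)) hz0 ?_ hzv
  have hpw : 0 ≤ -(p • g w) := smul_neg p (g w) ▸ zsmul_nonneg (neg_nonneg.2 hgw) hp.le
  rw [map_sub, map_zsmul, map_zsmul, sub_eq_add_neg]
  exact add_pos_of_pos_of_nonneg (zsmul_pos hgv hq) hpw

theorem HasMinimalPositiveSupport.exists_smul_eq_smul [Finite ι]
    (hmin : HasMinimalPositiveSupport L g v) (hv : v ∈ L) (hv0 : 0 ≤ v) (hgv : 0 < g v)
    {w : ι → ℤ} (hw : w ∈ L) (hw0 : 0 ≤ w) (hwne : w ≠ 0) (hwv : support w ⊆ support v) :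
    ∃ p q : ℤ, 0 < p ∧ 0 < q ∧ q • w = p • v := by
  have hvne : v ≠ 0 := by rintro rfl; simp at hgv
  have hwv' := hmin.support_eq hv hv0 hgv hw hw0 hwne hwv
  obtain ⟨p, q, hp, hq, hz0, hzw⟩ :=
    exists_smul_sub_smul_nonneg_support_ssubset hw0 hv0 hvne hwv'.superset
  refine ⟨p, q, hp, hq, sub_eq_zero.1 (not_not.1 fun hz => hzw.ne ?_)⟩
  rw [hmin.support_eq hv hv0 hgv (L.sub_mem (L.zsmul_mem hw q) (L.zsmul_mem hv p)) hz0 hz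
    (hwv' ▸ hzw.subset), hwv']

theorem HasMinimalPositiveSupport.exists_pos_eq_smul [Fintype ι]
    (hmin : HasMinimalPositiveSupport L g v) (hv : v ∈ L) (hv0 : 0 ≤ v) (hgv : 0 < g v)
    (hprim : Finset.univ.gcd (fun i => (v i).natAbs) = 1)
    {w : ι → ℤ} (hw : w ∈ L) (hw0 : 0 ≤ w) (hwne : w ≠ 0) (hwv : support w ⊆ support v) :
    ∃ k : ℤ, 0 < k ∧ w = k • v := by
  obtain ⟨p, q, hp, hq, h⟩ := hmin.exists_smul_eq_smul hv hv0 hgv hw hw0 hwne hwv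
  obtain ⟨k, rfl, rfl⟩ := exists_eq_smul_of_smul_eq_smul hprim hq.ne' h
  exact ⟨k, pos_of_mul_pos_right hp hq.le, rfl⟩

theorem HasMinimalPositiveSupport.eq_zero_or_eq_zero_of_add_eq [Fintype ι]
    (hmin : HasMinimalPositiveSupport L g v) (hv : v ∈ L) (hv0 : 0 ≤ v) (hgv : 0 < g v)
    (hprim : Finset.univ.gcd (fun i => (v i).natAbs) = 1)
    {x y : ι → ℤ} (hx : x ∈ L) (hy : y ∈ L) (hx0 : 0 ≤ x) (hy0 : 0 ≤ y) (hxy : x + y = v) :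
    x = 0 ∨ y = 0 := by
  by_contra! ⟨hxne, hyne⟩
  have hvne : v ≠ 0 := by rintro rfl; simp at hgv
  have hxv := support_subset_of_nonneg_of_le hx0 (hxy ▸ le_add_of_nonneg_right hy0)
  have hyv := support_subset_of_nonneg_of_le hy0 (hxy ▸ le_add_of_nonneg_left hx0)
  obtain ⟨k, hk, rfl⟩ := hmin.exists_pos_eq_smul hv hv0 hgv hprim hx hx0 hxne hxv
  obtain ⟨l, hl, rfl⟩ := hmin.exists_pos_eq_smul hv hv0 hgv hprim hy hy0 hyne hyv
  have hkl : k + l = 1 := smul_left_injective ℤ hvne (show (k + l) • v = (1 : ℤ) • v by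
    rwa [add_smul, one_smul])
  omega

end

/-- If `v` is a nonzero integer vector in the cone `C` with `f v > 0`
and minimal support among such integer vectors, then `u = (1/d)·v` (where `d` is
the gcd of the coordinates of `v`) lies in `C ∩ ℤ^N`, has `f u > 0`, and cannot be
written as a sum of two nonzero integer vectors in `C`. -/
theorem stmt_1 {m N : ℕ} (A : Matrix (Fin m) (Fin N) ℚ)
    (C : Set (Fin N → ℝ))
    (hC : C = {x | (∀ i, 0 ≤ x i) ∧ (A.map ((↑) : ℚ → ℝ)).mulVec x = 0})
    (f : (Fin N → ℝ) →ₗ[ℝ] ℝ)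
    (v : Fin N → ℤ) (hvC : (fun i => (v i : ℝ)) ∈ C) (hvne : v ≠ 0)
    (hfv : 0 < f (fun i => (v i : ℝ)))
    (hmin : ¬ ∃ w : Fin N → ℤ, (fun i => (w i : ℝ)) ∈ C ∧
      0 < f (fun i => (w i : ℝ)) ∧ {i | w i ≠ 0} ⊂ {i | v i ≠ 0})
    (d : ℕ) (hd : d = Finset.univ.gcd (fun i => (v i).natAbs))
    (u : Fin N → ℝ) (hu : u = ((d : ℝ))⁻¹ • (fun i => (v i : ℝ))) :
    u ∈ C ∧ (∀ i, ∃ z : ℤ, u i = (z : ℝ)) ∧ 0 < f u ∧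
      ¬ ∃ x y : Fin N → ℝ, x ∈ C ∧ y ∈ C ∧
        (∀ i, ∃ z : ℤ, x i = (z : ℝ)) ∧ (∀ i, ∃ z : ℤ, y i = (z : ℝ)) ∧
        x ≠ 0 ∧ y ≠ 0 ∧ u = x + y := by
  obtain ⟨U, hvU, hU⟩ := exists_eq_gcd_natAbs_smul hvne
  rw [← hd] at hvU
  have hd0 : (0 : ℝ) < d :=
    Nat.cast_pos.2 <| Nat.pos_of_ne_zero fun hd0 => by simp [hd0, hvne] at hvU
  have hUu : (fun i => (U i : ℝ)) = u := by
    ext i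
    rw [hu, hvU]
    simp [field]
  have huC : u ∈ C := hu ▸ hC ▸ smul_mem_cone (inv_nonneg.2 hd0.le) (hC ▸ hvC)
  have hfu : 0 < f u := by
    rw [hu, map_smul, smul_eq_mul]
    exact mul_pos (inv_pos.2 hd0) hfv
  refine ⟨huC, fun i => ⟨U i, by rw [← hUu]⟩, hfu, ?_⟩
  rintro ⟨x, y, hxC, hyC, hxZ, hyZ, hx0, hy0, hxy⟩
  obtain ⟨X, rfl⟩ := exists_eq_intCast hxZ
  obtain ⟨Y, rfl⟩ := exists_eq_intCast hyZ
  set L := ((A.map ((↑) : ℚ → ℝ)).mulVecLin.toAddMonoidHom.comp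
    ((Int.castAddHom ℝ).compLeft (Fin N))).ker
  set g := f.toAddMonoidHom.comp ((Int.castAddHom ℝ).compLeft (Fin N))
  have hmem : ∀ w, (fun i => (w i : ℝ)) ∈ C ↔ 0 ≤ w ∧ w ∈ L :=
    hC ▸ intCast_mem_cone_iff (A.map ((↑) : ℚ → ℝ))
  rw [← hUu] at huC hfu hxy
  rw [hmem] at huC hxC hyC
  have hsupp : support U = support v := by
    rw [hvU, support_const_smul_of_ne_zero _ _ (by exact_mod_cast hd0.ne')]
  have hUmin : HasMinimalPositiveSupport L g U := fun w hwL hw0 hgw hwU =>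
    hmin ⟨w, (hmem w).2 ⟨hw0, hwL⟩, hgw, (hsupp ▸ hwU : support w ⊂ support v)⟩
  have hXY : X + Y = U :=
    funext fun i => Int.cast_injective (α := ℝ) (by simpa using (congrFun hxy i).symm)
  rcases hUmin.eq_zero_or_eq_zero_of_add_eq huC.2 huC.1 hfu hU hxC.2 hyC.2 hxC.1 hyC.1 hXY
    with rfl | rfl
  · exact hx0 (funext fun _ => Int.cast_zero)
  · exact hy0 (funext fun _ => Int.cast_zero)
end

section
/- Let A be an m×N matrix with rational entries and let C = {x ∈ ℝ^N : x_i ≥ 0 for all i and Ax = 0}. Then every v ∈ C can be written as a finite sum v = λ_1·e_1 + … + λ_k·e_k (with k ≥ 0), where each λ_i > 0 is real, each e_i ∈ C ∩ ℤ^N is a nonzero integer vector lying on an extreme ray of C, no e_i is a positive multiple of e_j for i ≠ j (the e_i lie on pairwise distinct extreme rays), and the support of each e_i is contained in the support of v. -/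
open Matrix in
private lemma _dummy : True := trivial
open scoped Matrix

private def InC {m N : ℕ} (A : Matrix (Fin m) (Fin N) ℚ) (x : Fin N → ℝ) : Prop :=
  (∀ i, 0 ≤ x i) ∧ (A.map ((↑) : ℚ → ℝ)).mulVec x = 0

private def IsExt {m N : ℕ} (A : Matrix (Fin m) (Fin N) ℚ) (e : Fin N → ℝ) : Prop :=
  ∀ a b : Fin N → ℝ, InC A a → InC A b → e = a + b →
    (∃ μ : ℝ, 0 ≤ μ ∧ a = μ • e) ∧ (∃ ν : ℝ, 0 ≤ ν ∧ b = ν • e)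

private lemma InC_smul {m N : ℕ} {A : Matrix (Fin m) (Fin N) ℚ} {x : Fin N → ℝ}
    (hx : InC A x) {c : ℝ} (hc : 0 ≤ c) : InC A (c • x) := by
  refine ⟨fun i => mul_nonneg hc (hx.1 i), ?_⟩
  rw [Matrix.mulVec_smul, hx.2, smul_zero]

private lemma IsExt_smul {m N : ℕ} {A : Matrix (Fin m) (Fin N) ℚ} {v : Fin N → ℝ}
    (hv : IsExt A v) {s : ℝ} (hs : 0 < s) : IsExt A (s • v) := by
  intro a b ha hb hab
  have hv' : v = s⁻¹ • a + s⁻¹ • b := by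
    rw [← smul_add, ← hab, smul_smul, inv_mul_cancel₀ hs.ne', one_smul]
  obtain ⟨⟨μ, hμ, haμ⟩, ⟨ν, hν, hbν⟩⟩ := hv (s⁻¹ • a) (s⁻¹ • b)
    (InC_smul ha (by positivity)) (InC_smul hb (by positivity)) hv'
  constructor
  · refine ⟨μ, hμ, ?_⟩
    have := congrArg (fun y => s • y) haμ
    simpa [smul_smul, mul_inv_cancel₀ hs.ne', mul_comm, mul_assoc, mul_left_comm] using this
  · refine ⟨ν, hν, ?_⟩
    have := congrArg (fun y => s • y) hbν
    simpa [smul_smul, mul_inv_cancel₀ hs.ne', mul_comm, mul_assoc, mul_left_comm] using this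

private lemma rat_kernel {ι : Type*} [Fintype ι] {N : ℕ} (B : Matrix ι (Fin N) ℚ)
    (x : Fin N → ℝ) (hx : x ≠ 0) (hBx : (B.map ((↑) : ℚ → ℝ)).mulVec x = 0) :
    ∃ u : Fin N → ℚ, u ≠ 0 ∧ B.mulVec u = 0 := by
  classical
  set G : Matrix (Fin N) (Fin N) ℚ := Bᵀ * B with hG
  have hGmap : G.map ((↑) : ℚ → ℝ) = (B.map ((↑) : ℚ → ℝ))ᵀ * (B.map ((↑) : ℚ → ℝ)) := by
    ext i j
    simp [hG, Matrix.mul_apply, Matrix.map_apply, Matrix.transpose_apply]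
  have h1 : (G.map ((↑) : ℚ → ℝ)).mulVec x = 0 := by
    rw [hGmap, ← Matrix.mulVec_mulVec, hBx, Matrix.mulVec_zero]
  have hdet : (G.map ((↑) : ℚ → ℝ)).det = 0 :=
    Matrix.exists_mulVec_eq_zero_iff.mp ⟨x, hx, h1⟩
  have hdetQ : G.det = 0 := by
    have h2 : ((G.det : ℚ) : ℝ) = (G.map ((↑) : ℚ → ℝ)).det := by
      rw [show (G.map ((↑) : ℚ → ℝ)) = (Rat.castHom ℝ).mapMatrix G from rfl,
        ← RingHom.map_det]
      rfl
    exact_mod_cast h2.trans hdet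
  obtain ⟨u, hu, hGu⟩ := Matrix.exists_mulVec_eq_zero_iff.mpr hdetQ
  refine ⟨u, hu, ?_⟩
  have hdp : (B.mulVec u) ⬝ᵥ (B.mulVec u) = 0 := by
    have h2 : u ⬝ᵥ (G.mulVec u) = 0 := by rw [hGu, dotProduct_zero]
    rw [hG, ← Matrix.mulVec_mulVec, Matrix.dotProduct_mulVec, Matrix.vecMul_transpose] at h2
    exact h2
  funext i
  have hsum : ∑ j, (B.mulVec u j) * (B.mulVec u j) = 0 := hdp
  have := (Finset.sum_eq_zero_iff_of_nonneg (fun j _ => mul_self_nonneg (B.mulVec u j))).mp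
    hsum i (Finset.mem_univ i)
  simpa [mul_self_eq_zero] using this

private lemma rat_den_int (q : ℚ) {D : ℕ} (h : q.den ∣ D) : ∃ z : ℤ, (D : ℚ) * q = z := by
  obtain ⟨c, rfl⟩ := h
  refine ⟨c * q.num, ?_⟩
  have h0 : ((q.den : ℚ)) ≠ 0 := by exact_mod_cast q.den_ne_zero
  have hden : ((q.den : ℚ)) * q = q.num := by
    nth_rewrite 2 [← Rat.num_div_den q]
    field_simp
  push_cast
  rw [mul_comm (q.den : ℚ) (c : ℚ), mul_assoc, hden]

private lemma merge_rays {N : ℕ} : ∀ (k : ℕ) (lam : Fin k → ℝ) (e : Fin k → (Fin N → ℝ)),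
    (∀ i, 0 < lam i) →
    ∃ (k' : ℕ) (lam' : Fin k' → ℝ) (e' : Fin k' → (Fin N → ℝ)),
      (∀ i, 0 < lam' i) ∧ (∀ i, ∃ j, e' i = e j) ∧
      (∀ i j, i ≠ j → ¬∃ t : ℝ, 0 < t ∧ e' i = t • e' j) ∧
      ∑ i, lam' i • e' i = ∑ i, lam i • e i := by
  intro k
  induction k with
  | zero =>
    intro lam e h
    exact ⟨0, lam, e, h, fun i => ⟨i, rfl⟩, fun i => i.elim0, rfl⟩
  | succ n IH =>
    intro lam e hpos
    classical
    by_cases hd : ∃ i j : Fin (n + 1), i ≠ j ∧ ∃ t : ℝ, 0 < t ∧ e i = t • e j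
    · obtain ⟨i, j, hij, t, ht, hrel⟩ := hd
      obtain ⟨q0, hq0⟩ := Fin.exists_succAbove_eq (show j ≠ i from hij.symm)
      set lam2 : Fin n → ℝ := fun q => lam (i.succAbove q) + if q = q0 then t * lam i else 0
        with hlam2
      set e2 : Fin n → (Fin N → ℝ) := fun q => e (i.succAbove q) with he2
      have hpos2 : ∀ q, 0 < lam2 q := by
        intro q
        have : (0:ℝ) ≤ if q = q0 then t * lam i else 0 := by
          split
          · exact le_of_lt (mul_pos ht (hpos i))
          · exact le_rfl
        calc (0:ℝ) < lam (i.succAbove q) := hpos _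
          _ ≤ lam2 q := le_add_of_nonneg_right this
      have hsum2 : ∑ q, lam2 q • e2 q = ∑ r, lam r • e r := by
        rw [Fin.sum_univ_succAbove (fun r => lam r • e r) i]
        have : ∀ q, lam2 q • e2 q
            = lam (i.succAbove q) • e2 q + (if q = q0 then (t * lam i) • e2 q else 0) := by
          intro q
          rw [hlam2]
          simp only [add_smul]
          split <;> simp
        rw [Finset.sum_congr rfl (fun q _ => this q), Finset.sum_add_distrib,
          Finset.sum_ite_eq' Finset.univ q0]
        simp only [Finset.mem_univ, if_true, he2, hq0]
        rw [hrel, smul_smul, mul_comm t (lam i), ← smul_smul]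
        abel
      obtain ⟨k', lam', e', h1, h2, h3, h4⟩ := IH lam2 e2 hpos2
      refine ⟨k', lam', e', h1, ?_, h3, h4.trans hsum2⟩
      intro i'
      obtain ⟨q, hq⟩ := h2 i'
      exact ⟨i.succAbove q, hq⟩
    · push_neg at hd
      refine ⟨n + 1, lam, e, hpos, fun i => ⟨i, rfl⟩, ?_, rfl⟩
      intro i j hij
      rintro ⟨t, ht, hrel⟩
      exact hd i j hij t ht hrel

private lemma decomp {m N : ℕ} (A : Matrix (Fin m) (Fin N) ℚ) :
    ∀ n : ℕ, ∀ v : Fin N → ℝ, InC A v →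
      (Finset.univ.filter (fun j => v j ≠ 0)).card = n →
      ∃ (k : ℕ) (lam : Fin k → ℝ) (e : Fin k → (Fin N → ℝ)),
        (∀ i, 0 < lam i) ∧ (∀ i, InC A (e i)) ∧ (∀ i, e i ≠ 0) ∧
        (∀ i j, ∃ z : ℤ, e i j = (z : ℝ)) ∧ (∀ i, IsExt A (e i)) ∧
        (∀ i, {j | e i j ≠ 0} ⊆ {j | v j ≠ 0}) ∧ v = ∑ i, lam i • e i := by
  intro n
  induction n using Nat.strong_induction_on with
  | _ n IH =>
    intro v hv hcard
    classical
    by_cases hv0 : v = 0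
    · subst hv0
      exact ⟨0, Fin.elim0, Fin.elim0, fun i => i.elim0, fun i => i.elim0, fun i => i.elim0,
        fun i => i.elim0, fun i => i.elim0, fun i => i.elim0, by simp⟩
    set S : Finset (Fin N) := Finset.univ.filter (fun j => v j ≠ 0) with hS
    have hSne : S.Nonempty := by
      obtain ⟨j, hj⟩ := Function.ne_iff.mp hv0
      have hj' : v j ≠ 0 := by simpa using hj
      exact ⟨j, by simp [hS, hj']⟩
    have hvpos : ∀ i ∈ S, 0 < v i := fun i hi =>
      (hv.1 i).lt_of_ne (Ne.symm (by simpa [hS] using hi))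
    by_cases hext : IsExt A v
    · -- EXTREME CASE
      set B : Matrix (Fin m ⊕ Fin N) (Fin N) ℚ :=
        Matrix.of (Sum.elim (fun i j => A i j)
          (fun i j => if v i = 0 ∧ i = j then 1 else 0)) with hB
      have hBx : (B.map ((↑) : ℚ → ℝ)).mulVec v = 0 := by
        funext r
        cases r with
        | inl i =>
          have h := congrFun hv.2 i
          simpa [hB, Matrix.mulVec, dotProduct, Matrix.map_apply] using h
        | inr i =>
          by_cases hvi : v i = 0
          · simp [hB, Matrix.mulVec, dotProduct, Matrix.map_apply, hvi,
              apply_ite ((↑) : ℚ → ℝ), ite_mul, Finset.sum_ite_eq]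
          · simp [hB, Matrix.mulVec, dotProduct, Matrix.map_apply, hvi]
      obtain ⟨u, hu, hBu⟩ := rat_kernel B v hv0 hBx
      set uR : Fin N → ℝ := fun j => ((u j : ℚ) : ℝ) with huR
      have hBuR : (B.map ((↑) : ℚ → ℝ)).mulVec uR = 0 := by
        funext r
        have h0 : ((B.mulVec u r : ℚ) : ℝ) = 0 := by rw [hBu]; simp
        rw [Pi.zero_apply, ← h0]
        simp only [Matrix.mulVec, dotProduct, Matrix.map_apply, huR]
        push_cast
        rfl
      have hAuR : (A.map ((↑) : ℚ → ℝ)).mulVec uR = 0 := by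
        funext i
        have h := congrFun hBuR (Sum.inl i)
        simpa [hB, Matrix.mulVec, dotProduct, Matrix.map_apply] using h
      have hsupp_uR : ∀ i, v i = 0 → uR i = 0 := by
        intro i hvi
        have h := congrFun hBuR (Sum.inr i)
        simpa [hB, Matrix.mulVec, dotProduct, Matrix.map_apply, hvi,
          apply_ite ((↑) : ℚ → ℝ), ite_mul, Finset.sum_ite_eq] using h
      set ε : ℝ := S.inf' hSne (fun i => v i / (|uR i| + 1)) with hε
      have hεpos : 0 < ε := by
        rw [hε, Finset.lt_inf'_iff]
        intro i hi
        have h := hvpos i hi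
        exact div_pos h (by positivity)
      have hbound : ∀ i, |ε * uR i| ≤ v i := by
        intro i
        by_cases hvi : v i = 0
        · simp [hsupp_uR i hvi, hvi]
        · have hi : i ∈ S := by simp [hS, hvi]
          have h1 : ε ≤ v i / (|uR i| + 1) := Finset.inf'_le _ hi
          have h2 : (0:ℝ) < |uR i| + 1 := by positivity
          rw [abs_mul, abs_of_pos hεpos]
          calc ε * |uR i| ≤ (v i / (|uR i| + 1)) * (|uR i| + 1) := by
                apply mul_le_mul h1 (by linarith) (abs_nonneg _)
                exact div_nonneg (hv.1 i) h2.le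
            _ = v i := div_mul_cancel₀ _ (ne_of_gt h2)
      set a : Fin N → ℝ := (2⁻¹ : ℝ) • (v + ε • uR) with ha
      set b : Fin N → ℝ := (2⁻¹ : ℝ) • (v - ε • uR) with hb
      have haC : InC A a := by
        constructor
        · intro i
          have h1 := hbound i
          have h2 := neg_abs_le (ε * uR i)
          have h3 : (0:ℝ) ≤ v i + ε * uR i := by linarith
          simp only [ha, Pi.smul_apply, Pi.add_apply, smul_eq_mul]
          nlinarith
        · rw [ha, Matrix.mulVec_smul, Matrix.mulVec_add, Matrix.mulVec_smul, hv.2, hAuR]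
          simp
      have hbC : InC A b := by
        constructor
        · intro i
          have h1 := hbound i
          have h2 := le_abs_self (ε * uR i)
          have h3 : (0:ℝ) ≤ v i - ε * uR i := by linarith
          simp only [hb, Pi.smul_apply, Pi.sub_apply, smul_eq_mul]
          nlinarith
        · rw [hb, Matrix.mulVec_smul, Matrix.mulVec_sub, Matrix.mulVec_smul, hv.2, hAuR]
          simp
      have hab : v = a + b := by
        funext i
        simp [ha, hb, smul_eq_mul]
        ring
      obtain ⟨⟨μ, hμ, haμ⟩, -⟩ := hext a b haC hbC hab
      have hc : ∀ j, uR j = ((2 * μ - 1) / ε) * v j := by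
        intro j
        have h := congrFun haμ j
        simp [ha, smul_eq_mul] at h
        rw [div_mul_eq_mul_div, eq_div_iff hεpos.ne']
        linear_combination 2 * h
      set c : ℝ := (2 * μ - 1) / ε with hcdef
      have hcne : c ≠ 0 := by
        intro h0
        apply hu
        funext j
        have h1 : uR j = 0 := by rw [hc j, h0, zero_mul]
        have h2 : ((u j : ℚ) : ℝ) = 0 := h1
        rw [Pi.zero_apply]
        exact_mod_cast h2
      obtain ⟨w, hwne, cw, hcw, hwR⟩ :
          ∃ (w : Fin N → ℚ) (_ : w ≠ 0) (cw : ℝ), 0 < cw ∧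
            (fun j => ((w j : ℚ) : ℝ)) = cw • v := by
        rcases hcne.lt_or_gt with hneg | hpos'
        · refine ⟨-u, by simpa using hu, -c, by linarith, ?_⟩
          funext j
          have h1 := hc j
          simp only [Pi.neg_apply, Pi.smul_apply, smul_eq_mul]
          push_cast
          rw [show ((u j : ℚ) : ℝ) = uR j from rfl, h1]
          ring
        · refine ⟨u, hu, c, hpos', ?_⟩
          funext j
          have h1 := hc j
          simp only [Pi.smul_apply, smul_eq_mul]
          rw [show ((u j : ℚ) : ℝ) = uR j from rfl, h1]
      set D : ℕ := ∏ i, (w i).den with hD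
      have hDpos : 0 < D := Finset.prod_pos fun i _ => (w i).pos
      set s : ℝ := (D : ℝ) * cw with hs
      have hDpos' : (0:ℝ) < (D : ℝ) := by exact_mod_cast hDpos
      have hspos : 0 < s := by
        rw [hs]
        exact mul_pos hDpos' hcw
      refine ⟨1, fun _ => s⁻¹, fun _ => s • v, fun _ => inv_pos.mpr hspos,
        fun _ => InC_smul hv hspos.le, fun _ => smul_ne_zero hspos.ne' hv0,
        ?_, fun _ => IsExt_smul hext hspos, ?_, ?_⟩
      · intro _ j
        have hdvd : (w j).den ∣ D := by
          rw [hD]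
          exact Finset.dvd_prod_of_mem (fun i => (w i).den) (Finset.mem_univ j)
        obtain ⟨z, hz⟩ := rat_den_int (w j) hdvd
        refine ⟨z, ?_⟩
        have h1 : cw * v j = ((w j : ℚ) : ℝ) := (congrFun hwR j).symm
        have h2 : ((((D : ℚ) * w j : ℚ)) : ℝ) = (z : ℝ) := by rw [hz]; norm_cast
        push_cast at h2
        simp only [Pi.smul_apply, smul_eq_mul, hs]
        rw [mul_assoc, h1, h2]
      · intro _ j hj
        simp only [Set.mem_setOf_eq, Pi.smul_apply, smul_eq_mul] at hj ⊢
        intro h0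
        exact hj (by rw [h0, mul_zero])
      · rw [Fin.sum_univ_one, inv_smul_smul₀ hspos.ne']
    · -- NON-EXTREME CASE
      simp only [IsExt, not_forall] at hext
      obtain ⟨a, b, haC, hbC, hab, hbad⟩ := hext
      have hsupp_ab : ∀ j, v j = 0 → a j = 0 ∧ b j = 0 := by
        intro j hj
        have h := congrFun hab j
        rw [Pi.add_apply] at h
        have h1 := haC.1 j
        have h2 := hbC.1 j
        constructor <;> linarith
      obtain ⟨x, hxC, hxsupp, hxnm⟩ :
          ∃ x, InC A x ∧ (∀ j, v j = 0 → x j = 0) ∧ ¬∃ μ : ℝ, 0 ≤ μ ∧ x = μ • v := by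
        rcases not_and_or.mp hbad with hP | hQ
        · exact ⟨a, haC, fun j hj => (hsupp_ab j hj).1, hP⟩
        · exact ⟨b, hbC, fun j hj => (hsupp_ab j hj).2, hQ⟩
      set σ1 : ℝ := S.inf' hSne (fun i => x i / v i) with hσ1
      set σ2 : ℝ := S.sup' hSne (fun i => x i / v i) with hσ2
      have hσ1nonneg : 0 ≤ σ1 := by
        obtain ⟨i0, hi0, hval⟩ := Finset.exists_mem_eq_inf' hSne (fun i => x i / v i)
        rw [hσ1, hval]
        exact div_nonneg (hxC.1 i0) (hv.1 i0)
      have hσlt : σ1 < σ2 := by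
        rcases lt_or_ge σ1 σ2 with h | h
        · exact h
        · exfalso
          apply hxnm
          refine ⟨σ1, hσ1nonneg, funext fun j => ?_⟩
          by_cases hj : v j = 0
          · simp [hxsupp j hj, hj]
          · have hjS : j ∈ S := by simp [hS, hj]
            have hup : x j / v j ≤ σ2 := by rw [hσ2]; exact Finset.le_sup' (f := fun i => x i / v i) hjS
            have hlo : σ1 ≤ x j / v j := by rw [hσ1]; exact Finset.inf'_le _ hjS
            have heq : x j / v j = σ1 := le_antisymm (hup.trans h) hlo
            have := (div_eq_iff hj).mp heq
            simp [this, mul_comm]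
      set d : Fin N → ℝ := x - σ1 • v with hd
      set w : Fin N → ℝ := σ2 • v - x with hw
      have hdsupp : ∀ j, v j = 0 → d j = 0 := by
        intro j hj
        simp [hd, hj, hxsupp j hj]
      have hwsupp : ∀ j, v j = 0 → w j = 0 := by
        intro j hj
        simp [hw, hj, hxsupp j hj]
      have hdC : InC A d := by
        constructor
        · intro i
          by_cases hvi : v i = 0
          · exact (hdsupp i hvi).ge
          · have hiS : i ∈ S := by simp [hS, hvi]
            have h1 : σ1 ≤ x i / v i := by rw [hσ1]; exact Finset.inf'_le _ hiS
            have h2 := hvpos i hiS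
            have h3 : σ1 * v i ≤ x i := (le_div_iff₀ h2).mp h1
            simpa [hd] using h3
        · rw [hd, Matrix.mulVec_sub, Matrix.mulVec_smul, hv.2, hxC.2]
          simp
      have hwC : InC A w := by
        constructor
        · intro i
          by_cases hvi : v i = 0
          · exact (hwsupp i hvi).ge
          · have hiS : i ∈ S := by simp [hS, hvi]
            have h1 : x i / v i ≤ σ2 := by rw [hσ2]; exact Finset.le_sup' (f := fun i => x i / v i) hiS
            have h2 := hvpos i hiS
            have h3 : x i ≤ σ2 * v i := (div_le_iff₀ h2).mp h1
            simpa [hw] using h3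
        · rw [hw, Matrix.mulVec_sub, Matrix.mulVec_smul, hv.2, hxC.2]
          simp
      obtain ⟨i0, hi0S, hi0⟩ := Finset.exists_mem_eq_inf' hSne (fun i => x i / v i)
      obtain ⟨i1, hi1S, hi1⟩ := Finset.exists_mem_eq_sup' hSne (fun i => x i / v i)
      have hvi0 : v i0 ≠ 0 := by simpa [hS] using hi0S
      have hvi1 : v i1 ≠ 0 := by simpa [hS] using hi1S
      have hdi0 : d i0 = 0 := by
        have : x i0 = σ1 * v i0 := by
          rw [hσ1, hi0, div_mul_cancel₀ _ hvi0]
        simp [hd, this]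
      have hwi1 : w i1 = 0 := by
        have : x i1 = σ2 * v i1 := by
          rw [hσ2, hi1, div_mul_cancel₀ _ hvi1]
        simp [hw, this]
      have hScard : S.card = n := hcard
      have hcard_d : (Finset.univ.filter (fun j => d j ≠ 0)).card < n := by
        have hsub : Finset.univ.filter (fun j => d j ≠ 0) ⊆ S.erase i0 := by
          intro j hj
          simp only [Finset.mem_filter, Finset.mem_univ, true_and] at hj
          refine Finset.mem_erase.mpr ⟨?_, ?_⟩
          · rintro rfl; exact hj hdi0
          · simp only [hS, Finset.mem_filter, Finset.mem_univ, true_and]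
            intro hvj
            exact hj (hdsupp j hvj)
        calc (Finset.univ.filter (fun j => d j ≠ 0)).card
            ≤ (S.erase i0).card := Finset.card_le_card hsub
          _ < S.card := Finset.card_erase_lt_of_mem hi0S
          _ = n := hScard
      have hcard_w : (Finset.univ.filter (fun j => w j ≠ 0)).card < n := by
        have hsub : Finset.univ.filter (fun j => w j ≠ 0) ⊆ S.erase i1 := by
          intro j hj
          simp only [Finset.mem_filter, Finset.mem_univ, true_and] at hj
          refine Finset.mem_erase.mpr ⟨?_, ?_⟩
          · rintro rfl; exact hj hwi1
          · simp only [hS, Finset.mem_filter, Finset.mem_univ, true_and]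
            intro hvj
            exact hj (hwsupp j hvj)
        calc (Finset.univ.filter (fun j => w j ≠ 0)).card
            ≤ (S.erase i1).card := Finset.card_le_card hsub
          _ < S.card := Finset.card_erase_lt_of_mem hi1S
          _ = n := hScard
      obtain ⟨k1, lam1, e1, h1pos, h1C, h1ne, h1int, h1ext, h1supp, h1sum⟩ :=
        IH _ hcard_d d hdC rfl
      obtain ⟨k2, lam2, e2, h2pos, h2C, h2ne, h2int, h2ext, h2supp, h2sum⟩ :=
        IH _ hcard_w w hwC rfl
      have hdw : d + w = (σ2 - σ1) • v := by
        funext j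
        simp [hd, hw, smul_eq_mul]
        ring
      have hσne : σ2 - σ1 ≠ 0 := by linarith
      have hv_eq : v = (σ2 - σ1)⁻¹ • (d + w) := by
        rw [hdw, smul_smul, inv_mul_cancel₀ hσne, one_smul]
      refine ⟨k1 + k2,
        Fin.addCases (fun i => (σ2 - σ1)⁻¹ * lam1 i) (fun i => (σ2 - σ1)⁻¹ * lam2 i),
        Fin.addCases e1 e2, ?_, ?_, ?_, ?_, ?_, ?_, ?_⟩
      · intro i
        refine Fin.addCases (fun i' => ?_) (fun i' => ?_) i <;>
          simp only [Fin.addCases_left, Fin.addCases_right]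
        · exact mul_pos (inv_pos.mpr (by linarith)) (h1pos i')
        · exact mul_pos (inv_pos.mpr (by linarith)) (h2pos i')
      · intro i
        refine Fin.addCases (fun i' => ?_) (fun i' => ?_) i <;>
          simp only [Fin.addCases_left, Fin.addCases_right]
        · exact h1C i'
        · exact h2C i'
      · intro i
        refine Fin.addCases (fun i' => ?_) (fun i' => ?_) i <;>
          simp only [Fin.addCases_left, Fin.addCases_right]
        · exact h1ne i'
        · exact h2ne i'
      · intro i
        refine Fin.addCases (fun i' => ?_) (fun i' => ?_) i <;>
          simp only [Fin.addCases_left, Fin.addCases_right]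
        · exact h1int i'
        · exact h2int i'
      · intro i
        refine Fin.addCases (fun i' => ?_) (fun i' => ?_) i <;>
          simp only [Fin.addCases_left, Fin.addCases_right]
        · exact h1ext i'
        · exact h2ext i'
      · intro i
        refine Fin.addCases (fun i' => ?_) (fun i' => ?_) i <;>
          simp only [Fin.addCases_left, Fin.addCases_right]
        · refine (h1supp i').trans ?_
          intro j hj
          simp only [Set.mem_setOf_eq] at hj ⊢
          intro hvj
          exact hj (hdsupp j hvj)
        · refine (h2supp i').trans ?_
          intro j hj
          simp only [Set.mem_setOf_eq] at hj ⊢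
          intro hvj
          exact hj (hwsupp j hvj)
      · rw [hv_eq, h1sum, h2sum, Fin.sum_univ_add]
        simp only [Fin.addCases_left, Fin.addCases_right]
        rw [smul_add, Finset.smul_sum, Finset.smul_sum]
        simp [mul_smul]

/-- Every `v` in the cone `C = {x : x ≥ 0, Ax = 0}` is a finite
positive combination of nonzero integer vectors lying on pairwise distinct extreme
rays of `C`, each with support contained in the support of `v`. -/
theorem stmt_6 {m N : ℕ} (A : Matrix (Fin m) (Fin N) ℚ)
    (C : Set (Fin N → ℝ))
    (hC : C = {x | (∀ i, 0 ≤ x i) ∧ (A.map ((↑) : ℚ → ℝ)).mulVec x = 0})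
    (v : Fin N → ℝ) (hvC : v ∈ C) :
    ∃ (k : ℕ) (lam : Fin k → ℝ) (e : Fin k → (Fin N → ℝ)),
      (∀ i, 0 < lam i) ∧
      (∀ i, e i ∈ C) ∧
      (∀ i, e i ≠ 0) ∧
      (∀ i j, ∃ z : ℤ, e i j = (z : ℝ)) ∧
      (∀ i, ∀ a b : Fin N → ℝ, a ∈ C → b ∈ C → e i = a + b →
        (∃ μ : ℝ, 0 ≤ μ ∧ a = μ • (e i)) ∧ (∃ ν : ℝ, 0 ≤ ν ∧ b = ν • (e i))) ∧
      (∀ i j, i ≠ j → ¬ ∃ t : ℝ, 0 < t ∧ e i = t • e j) ∧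
      (∀ i, {j | e i j ≠ 0} ⊆ {j | v j ≠ 0}) ∧
      v = ∑ i, lam i • e i := by
  subst hC
  have hv : InC A v := ⟨hvC.1, hvC.2⟩
  obtain ⟨k0, lam0, e0, h0pos, h0C, h0ne, h0int, h0ext, h0supp, h0sum⟩ :=
    decomp A _ v hv rfl
  obtain ⟨k, lam, e, hpos, hrange, hdist, hsum⟩ := merge_rays k0 lam0 e0 h0pos
  refine ⟨k, lam, e, hpos, ?_, ?_, ?_, ?_, hdist, ?_, ?_⟩
  · intro i; obtain ⟨j, hj⟩ := hrange i; rw [hj]; exact h0C j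
  · intro i; obtain ⟨j, hj⟩ := hrange i; rw [hj]; exact h0ne j
  · intro i j'; obtain ⟨j, hj⟩ := hrange i; rw [hj]; exact h0int j j'
  · intro i a b ha hb hab
    obtain ⟨j, hj⟩ := hrange i
    rw [hj] at hab ⊢
    exact h0ext j a b ha hb hab
  · intro i; obtain ⟨j, hj⟩ := hrange i; rw [hj]; exact h0supp j
  · rw [hsum]; exact h0sum
end

section
/- Let A be an m×N matrix with rational entries, let c ∈ ℚ^N, and let Z ⊆ {1,…,N}. Define the polyhedron P = {x ∈ ℝ^N : x_i ≥ 0 for all i, Ax = 0, x_i = 0 for all i ∈ Z, and c·x ≥ 1}. Suppose P is nonempty and that for every coordinate i ∉ Z there is no point x ∈ P with x_i = 0. Then there exists a vector r with all rational coordinates such that r ≥ 0 componentwise, Ar = 0, r_i = 0 for all i ∈ Z, c·r = 1, and P = {t·r : t ∈ ℝ, t ≥ 1}. In particular, any two points of P are positive real multiples of one another, and P contains a point with all rational coordinates. -/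
/-!
Let `L` be the real solution space of `A x = 0`, `x_Z = 0`, and `r ∈ P` a point with
`c·r = 1`. If `e ∈ L` with `c·e = 0` were nonzero, then moving from `r` along `±e` until a
first coordinate vanishes (a ratio test) would give a point of `P` with a zero coordinate
outside `Z`. So `L ∩ ker c = 0`, which makes `P` the ray `{t r : t ≥ 1}`. For rationality,
apply a `ℚ`-linear functional `φ : ℝ → ℚ` with `φ 1 = 1` to the coordinates of `r`: since the
equations are rational, `φ ∘ r` solves them too, hence equals `r`.
-/

open Matrix

section BaseChange

variable {K L κ n : Type*} [CommSemiring K] [Semiring L] [Algebra K L] [Fintype n]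

theorem Matrix.dotProduct_comp_linearMap (φ : L →ₗ[K] K) (c : n → K) (x : n → L) :
    c ⬝ᵥ (φ ∘ x) = φ ((algebraMap K L ∘ c) ⬝ᵥ x) := by
  simp [dotProduct, map_sum, ← Algebra.smul_def]

theorem Matrix.mulVec_comp_linearMap (φ : L →ₗ[K] K) (B : Matrix κ n K) (x : n → L) :
    B *ᵥ (φ ∘ x) = φ ∘ (B.map (algebraMap K L) *ᵥ x) := by
  ext k
  exact dotProduct_comp_linearMap φ (B k) x

end BaseChange

section Ray

variable {ι 𝕜 : Type*} [Field 𝕜] [LinearOrder 𝕜] [IsStrictOrderedRing 𝕜]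

theorem exists_add_smul_nonneg_apply_eq_zero [Fintype ι] {r d : ι → 𝕜} (hr : 0 ≤ r)
    (hd : ∃ j, d j < 0) :
    ∃ t : 𝕜, 0 ≤ r + t • d ∧ ∃ j, d j < 0 ∧ (r + t • d) j = 0 := by
  classical
  obtain ⟨j, hj, hmin⟩ := (Finset.univ.filter (d · < 0)).exists_min_image
    (fun i => r i / -d i) (by simpa [Finset.filter_nonempty_iff] using hd)
  simp only [Finset.mem_filter, Finset.mem_univ, true_and] at hj hmin
  refine ⟨r j / -d j, fun i => ?_, j, hj, ?_⟩
  · have ht : 0 ≤ r j / -d j := div_nonneg (hr j) (by linarith)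
    simp only [Pi.zero_apply, Pi.add_apply, Pi.smul_apply, smul_eq_mul]
    rcases lt_or_ge (d i) 0 with hi | hi
    · have := (le_div_iff₀ (neg_pos.mpr hi)).mp (hmin i hi)
      linarith
    · have hri : 0 ≤ r i := hr i
      nlinarith [mul_nonneg ht hi]
  · simp only [Pi.add_apply, Pi.smul_apply, smul_eq_mul]
    field_simp [hj.ne]
    ring

variable {L : Submodule 𝕜 (ι → 𝕜)} {ℓ : (ι → 𝕜) →ₗ[𝕜] 𝕜} {r : ι → 𝕜}

theorem exists_mem_nonneg_apply_eq_one {x : ι → 𝕜} (hxL : x ∈ L) (hx : 0 ≤ x) (hx1 : 0 < ℓ x) :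
    ∃ r ∈ L, 0 ≤ r ∧ ℓ r = 1 :=
  ⟨(ℓ x)⁻¹ • x, L.smul_mem _ hxL, smul_nonneg (inv_nonneg.mpr hx1.le) hx, by simp [hx1.ne']⟩

theorem eq_zero_of_mem_of_apply_eq_zero [Fintype ι] (hrL : r ∈ L) (hr : 0 ≤ r) (hr1 : ℓ r = 1)
    (hsupp : ∀ x ∈ L, 0 ≤ x → ℓ x = 1 → ∀ j, x j = 0 → ∀ z ∈ L, z j = 0)
    {e : ι → 𝕜} (heL : e ∈ L) (he : ℓ e = 0) : e = 0 := by
  have not_neg : ∀ d ∈ L, ℓ d = 0 → ∀ j, ¬ d j < 0 := by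
    intro d hdL hd j hj
    obtain ⟨t, hw, k, hk, hwk⟩ := exists_add_smul_nonneg_apply_eq_zero hr ⟨j, hj⟩
    have hwL : r + t • d ∈ L := L.add_mem hrL (L.smul_mem t hdL)
    have hw1 : ℓ (r + t • d) = 1 := by simp [hr1, hd]
    exact hk.ne (hsupp _ hwL hw hw1 k hwk d hdL)
  ext j
  rcases lt_trichotomy (e j) 0 with h | h | h
  · exact absurd h (not_neg e heL he j)
  · exact h
  · exact absurd (neg_lt_zero.mpr h) (not_neg (-e) (L.neg_mem heL) (by simp [he]) j)

theorem setOf_mem_nonneg_one_le_eq_ray (hrL : r ∈ L) (hr : 0 ≤ r) (hr1 : ℓ r = 1)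
    (hker : ∀ e ∈ L, ℓ e = 0 → e = 0) :
    {x | x ∈ L ∧ 0 ≤ x ∧ 1 ≤ ℓ x} = {x | ∃ t : 𝕜, 1 ≤ t ∧ x = t • r} := by
  ext x
  constructor
  · rintro ⟨hxL, -, hx1⟩
    refine ⟨ℓ x, hx1, sub_eq_zero.mp (hker _ (L.sub_mem hxL (L.smul_mem _ hrL)) ?_)⟩
    simp [hr1]
  · rintro ⟨t, ht, rfl⟩
    exact ⟨L.smul_mem t hrL, smul_nonneg (by linarith) hr, by simpa [hr1]⟩

end Ray

section Rational

variable {κ ι : Type*} [Fintype ι]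

def solutionSpace (A : Matrix κ ι ℚ) (Z : Set ι) : Submodule ℝ (ι → ℝ) :=
  LinearMap.ker (A.map ((↑) : ℚ → ℝ)).mulVecLin ⊓ ⨅ i ∈ Z, LinearMap.ker (LinearMap.proj i)

variable {A : Matrix κ ι ℚ} {Z : Set ι} {x : ι → ℝ}

theorem mem_solutionSpace :
    x ∈ solutionSpace A Z ↔ A.map ((↑) : ℚ → ℝ) *ᵥ x = 0 ∧ ∀ i ∈ Z, x i = 0 := by
  simp [solutionSpace]

theorem ratCast_comp_mem_solutionSpace (φ : ℝ →ₗ[ℚ] ℚ) (hx : x ∈ solutionSpace A Z) :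
    (fun i => (φ (x i) : ℝ)) ∈ solutionSpace A Z := by
  rw [mem_solutionSpace] at hx ⊢
  refine ⟨?_, fun i hi => by simp [hx.2 i hi]⟩
  have hq : A *ᵥ (φ ∘ x) = 0 := by
    rw [mulVec_comp_linearMap, show A.map (algebraMap ℚ ℝ) = A.map (↑) by ext; simp, hx.1]
    ext; simp
  ext k
  have h := (Rat.castHom ℝ).map_mulVec A (φ ∘ x) k
  rw [hq] at h
  simpa [Function.comp_def] using h.symm

theorem ratCast_dotProduct_comp (φ : ℝ →ₗ[ℚ] ℚ) (c : ι → ℚ) :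
    (fun i => (c i : ℝ)) ⬝ᵥ (fun i => (φ (x i) : ℝ)) = φ ((fun i => (c i : ℝ)) ⬝ᵥ x) := by
  have h := dotProduct_comp_linearMap φ c x
  rw [show algebraMap ℚ ℝ ∘ c = fun i => (c i : ℝ) by ext; simp] at h
  rw [← h]
  simp only [dotProduct, Function.comp_apply, Rat.cast_sum, Rat.cast_mul]

theorem exists_ratCast_eq_of_mem_solutionSpace {c : ι → ℚ} (hxL : x ∈ solutionSpace A Z)
    (hx1 : (fun i => (c i : ℝ)) ⬝ᵥ x = 1)
    (hker : ∀ e ∈ solutionSpace A Z, (fun i => (c i : ℝ)) ⬝ᵥ e = 0 → e = 0) :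
    ∀ i, ∃ q : ℚ, x i = q := by
  obtain ⟨φ, hφ⟩ := Module.Projective.exists_dual_eq_one ℚ (one_ne_zero : (1 : ℝ) ≠ 0)
  have hq1 : (fun i => (c i : ℝ)) ⬝ᵥ (fun i => (φ (x i) : ℝ)) = 1 := by
    rw [ratCast_dotProduct_comp, hx1, hφ, Rat.cast_one]
  have hq : (fun i => (φ (x i) : ℝ)) = x :=
    sub_eq_zero.mp (hker _ ((solutionSpace A Z).sub_mem (ratCast_comp_mem_solutionSpace φ hxL) hxL)
      (by rw [dotProduct_sub, hq1, hx1, sub_self]))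
  exact fun i => ⟨φ (x i), (congrFun hq i).symm⟩

end Rational

/-- If the polyhedron
`P = {x : x ≥ 0, Ax = 0, x_i = 0 (i ∈ Z), c·x ≥ 1}` is nonempty and no point of `P`
has `x_i = 0` for a coordinate `i ∉ Z`, then `P` is the ray `{t • r : t ≥ 1}` for
some rational vector `r` with `r ≥ 0`, `Ar = 0`, `r_i = 0` on `Z`, and `c·r = 1`. -/
theorem stmt_7 {m N : ℕ} (A : Matrix (Fin m) (Fin N) ℚ) (c : Fin N → ℚ)
    (Z : Set (Fin N))
    (P : Set (Fin N → ℝ))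
    (hP : P = {x | (∀ i, 0 ≤ x i) ∧ (A.map ((↑) : ℚ → ℝ)).mulVec x = 0 ∧
      (∀ i ∈ Z, x i = 0) ∧ 1 ≤ ∑ i, (c i : ℝ) * x i})
    (hne : P.Nonempty)
    (hmax : ∀ i ∉ Z, ¬ ∃ x ∈ P, x i = 0) :
    ∃ r : Fin N → ℝ, (∀ i, ∃ q : ℚ, r i = (q : ℝ)) ∧
      (∀ i, 0 ≤ r i) ∧ (A.map ((↑) : ℚ → ℝ)).mulVec r = 0 ∧
      (∀ i ∈ Z, r i = 0) ∧ (∑ i, (c i : ℝ) * r i) = 1 ∧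
      P = {x | ∃ t : ℝ, 1 ≤ t ∧ x = t • r} := by
  set L := solutionSpace A Z
  set ℓ := dotProductEquiv ℝ (Fin N) (fun i => (c i : ℝ))
  have hPL : P = {x | x ∈ L ∧ 0 ≤ x ∧ 1 ≤ ℓ x} := by
    subst hP; ext x
    simp only [Set.mem_ofPred_eq, L, ℓ, mem_solutionSpace, dotProductEquiv_apply_apply]
    exact ⟨fun ⟨hx, hxA, hxZ, hx1⟩ => ⟨⟨hxA, hxZ⟩, hx, hx1⟩,
      fun ⟨⟨hxA, hxZ⟩, hx, hx1⟩ => ⟨hx, hxA, hxZ, hx1⟩⟩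
  obtain ⟨r, hrL, hr, hr1⟩ : ∃ r ∈ L, 0 ≤ r ∧ ℓ r = 1 := by
    obtain ⟨x, hxL, hx, hx1⟩ := hPL ▸ hne
    exact exists_mem_nonneg_apply_eq_one hxL hx (one_pos.trans_le hx1)
  have hker : ∀ e ∈ L, ℓ e = 0 → e = 0 := by
    refine fun e => eq_zero_of_mem_of_apply_eq_zero hrL hr hr1 ?_
    intro x hxL hx hx1 j hj z hz
    have hjZ : j ∈ Z := by
      by_contra hjZ
      exact hmax j hjZ ⟨x, hPL ▸ ⟨hxL, hx, hx1.ge⟩, hj⟩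
    exact (mem_solutionSpace.mp hz).2 j hjZ
  exact ⟨r, exists_ratCast_eq_of_mem_solutionSpace hrL hr1 hker, hr, (mem_solutionSpace.mp hrL).1,
    (mem_solutionSpace.mp hrL).2, hr1, hPL.trans (setOf_mem_nonneg_one_le_eq_ray hrL hr hr1 hker)⟩
end

section
/- Let A be an m×N matrix with rational entries, let c ∈ ℚ^N, and let Z ⊆ {1,…,N}. Define P = {x ∈ ℝ^N : x_i ≥ 0 for all i, Ax = 0, x_i = 0 for all i ∈ Z, and c·x ≥ 1}, and suppose P is nonempty and that for every coordinate i ∉ Z there is no point x ∈ P with x_i = 0. Then every q ∈ P lies on an extreme ray of the cone C = {x ∈ ℝ^N : x_i ≥ 0 for all i and Ax = 0}; that is, whenever q = a + b with a, b ∈ C, both a and b are nonnegative real scalar multiples of q. -/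
/-!
Let `V` be the solution space of `Ax = 0` together with `x_i = 0` for `i ∈ Z`, so that `P` is
the part of the cone `V ∩ ℝ≥0^N` where `c·x ≥ 1`, and every point of `P` has zero set exactly `Z`.
A nonzero `w ≥ 0` in `V` vanishing at some `j ∉ Z` cannot exist: if `c·w > 0` a rescaling of `w`
lies in `P`, and otherwise `q - t w` lies in `P` for the largest `t` keeping it nonnegative, which
creates a new zero. Given `q = a + b`, subtract from `a` the largest multiple `t q` keeping it
nonnegative; the difference is such a `w`, hence zero, so `a = t q` and `b = (1 - t) q`.
-/

open Matrix

section

variable {ι 𝕜 : Type*} [Fintype ι] [Field 𝕜] [LinearOrder 𝕜] [IsStrictOrderedRing 𝕜]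

lemma exists_maximal_smul_le {x y : ι → 𝕜} (hx : 0 ≤ x) (hy : ∃ i, 0 < y i) :
    ∃ t : 𝕜, 0 ≤ t ∧ t • y ≤ x ∧ ∃ j, 0 < y j ∧ t * y j = x j := by
  classical
  obtain ⟨i, hi⟩ := hy
  obtain ⟨j, hj, hmin⟩ := (Finset.univ.filter fun k => 0 < y k).exists_min_image
    (fun k => x k / y k) ⟨i, by simpa using hi⟩
  rw [Finset.mem_filter] at hj
  have ht : 0 ≤ x j / y j := div_nonneg (hx j) hj.2.le
  refine ⟨x j / y j, ht, fun k => ?_, j, hj.2, div_mul_cancel₀ _ hj.2.ne'⟩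
  rcases lt_or_ge 0 (y k) with hk | hk
  · exact (le_div_iff₀ hk).1 (hmin k (by simpa using hk))
  · exact (mul_nonpos_of_nonneg_of_nonpos ht hk).trans (hx k)

def coneSlice (V : Submodule 𝕜 (ι → 𝕜)) (c : ι → 𝕜) : Set (ι → 𝕜) :=
  {x | x ∈ V ∧ 0 ≤ x ∧ 1 ≤ c ⬝ᵥ x}

variable {V : Submodule 𝕜 (ι → 𝕜)} {c : ι → 𝕜} {Z : Set ι}

lemma eq_zero_of_apply_eq_zero_of_notMem (hVZ : ∀ x ∈ V, ∀ i ∈ Z, x i = 0)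
    (hZ : ∀ x ∈ coneSlice V c, ∀ i ∉ Z, x i ≠ 0) {q : ι → 𝕜} (hq : q ∈ coneSlice V c)
    {w : ι → 𝕜} (hwV : w ∈ V) (hw : 0 ≤ w) {j : ι} (hj : j ∉ Z) (hwj : w j = 0) : w = 0 := by
  by_contra hw0
  obtain ⟨hqV, hq0, hqc⟩ := hq
  rcases lt_or_ge 0 (c ⬝ᵥ w) with hcw | hcw
  · refine hZ ((c ⬝ᵥ w)⁻¹ • w) ⟨V.smul_mem _ hwV, smul_nonneg (inv_nonneg.2 hcw.le) hw, ?_⟩ j hj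
      (by simp [hwj])
    rw [dotProduct_smul, smul_eq_mul, inv_mul_cancel₀ hcw.ne']
  · have hpos : ∃ i, 0 < w i := by
      by_contra! h
      exact hw0 (le_antisymm h hw)
    obtain ⟨t, ht, htw, k, hwk, hk⟩ := exists_maximal_smul_le hq0 hpos
    have hkZ : k ∉ Z := fun hk => hwk.ne' (hVZ w hwV k hk)
    refine hZ (q - t • w) ⟨V.sub_mem hqV (V.smul_mem t hwV), sub_nonneg.2 htw, ?_⟩ k hkZ
      (by simp [hk])
    rw [dotProduct_sub, dotProduct_smul, smul_eq_mul]
    linarith [mul_nonpos_of_nonneg_of_nonpos ht hcw]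

lemma exists_eq_smul_of_le (hVZ : ∀ x ∈ V, ∀ i ∈ Z, x i = 0)
    (hZ : ∀ x ∈ coneSlice V c, ∀ i ∉ Z, x i ≠ 0) {q : ι → 𝕜} (hq : q ∈ coneSlice V c)
    {a : ι → 𝕜} (haV : a ∈ V) (ha : 0 ≤ a) (haq : a ≤ q) :
    ∃ t : 𝕜, 0 ≤ t ∧ t ≤ 1 ∧ a = t • q := by
  have hpos : ∃ i, 0 < q i := by
    by_contra! h
    have hqc := hq.2.2
    rw [le_antisymm h hq.2.1, dotProduct_zero] at hqc
    exact not_le.2 zero_lt_one hqc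
  obtain ⟨t, ht, hta, j, hqj, hj⟩ := exists_maximal_smul_le ha hpos
  have hjZ : j ∉ Z := fun hj => hqj.ne' (hVZ q hq.1 j hj)
  have hw : a - t • q = 0 :=
    eq_zero_of_apply_eq_zero_of_notMem hVZ hZ hq (V.sub_mem haV (V.smul_mem t hq.1))
      (sub_nonneg.2 hta) hjZ (by simp [hj])
  refine ⟨t, ht, ?_, sub_eq_zero.1 hw⟩
  exact (mul_le_iff_le_one_left hqj).1 (hj.trans_le (haq j))

end

theorem stmt_8_general {m N : ℕ} (A : Matrix (Fin m) (Fin N) ℚ) (c : Fin N → ℚ)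
    (Z : Set (Fin N))
    (P : Set (Fin N → ℝ))
    (hP : P = {x | (∀ i, 0 ≤ x i) ∧ (A.map ((↑) : ℚ → ℝ)).mulVec x = 0 ∧
      (∀ i ∈ Z, x i = 0) ∧ 1 ≤ ∑ i, (c i : ℝ) * x i})
    (hmax : ∀ i ∉ Z, ¬ ∃ x ∈ P, x i = 0)
    (C : Set (Fin N → ℝ))
    (hCdef : C = {x | (∀ i, 0 ≤ x i) ∧ (A.map ((↑) : ℚ → ℝ)).mulVec x = 0}) :
    ∀ q ∈ P, ∀ a b : Fin N → ℝ, a ∈ C → b ∈ C → q = a + b →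
      (∃ μ : ℝ, 0 ≤ μ ∧ a = μ • q) ∧ (∃ ν : ℝ, 0 ≤ ν ∧ b = ν • q) := by
  set V : Submodule ℝ (Fin N → ℝ) :=
    LinearMap.ker (A.map ((↑) : ℚ → ℝ)).mulVecLin ⊓ Submodule.pi Z fun _ => ⊥
  have hVZ : ∀ x ∈ V, ∀ i ∈ Z, x i = 0 := fun x hx i hi => by
    simpa using (Submodule.mem_pi.1 (Submodule.mem_inf.1 hx).2) i hi
  have hPV : P = coneSlice V (fun i => (c i : ℝ)) := by
    ext x
    simp [hP, coneSlice, V, Submodule.mem_pi, Pi.le_def, dotProduct, and_assoc, and_comm,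
      and_left_comm]
  have hZ : ∀ x ∈ coneSlice V (fun i => (c i : ℝ)), ∀ i ∉ Z, x i ≠ 0 :=
    fun x hx i hi hxi => hmax i hi ⟨x, hPV ▸ hx, hxi⟩
  subst hCdef
  rintro q hq a b ⟨ha, haA⟩ ⟨hb, -⟩ rfl
  rw [hPV] at hq
  have haq : a ≤ a + b := le_add_of_nonneg_right hb
  have haV : a ∈ V := Submodule.mem_inf.2 ⟨haA, Submodule.mem_pi.2 fun i hi =>
    (Submodule.mem_bot ℝ).2 (le_antisymm ((haq i).trans_eq (hVZ _ hq.1 i hi)) (ha i))⟩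
  obtain ⟨t, ht0, ht1, hat⟩ := exists_eq_smul_of_le hVZ hZ hq haV ha haq
  refine ⟨⟨t, ht0, hat⟩, ⟨1 - t, sub_nonneg.2 ht1, ?_⟩⟩
  rw [sub_smul, one_smul, ← hat, add_sub_cancel_left]

/-- If the polyhedron
`P = {x : x ≥ 0, Ax = 0, x_i = 0 (i ∈ Z), c·x ≥ 1}` is nonempty and no point of `P`
has `x_i = 0` for a coordinate `i ∉ Z`, then every `q ∈ P` lies on an extreme ray of
the cone `C = {x : x ≥ 0, Ax = 0}`. -/
theorem stmt_8 {m N : ℕ} (A : Matrix (Fin m) (Fin N) ℚ) (c : Fin N → ℚ)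
    (Z : Set (Fin N))
    (P : Set (Fin N → ℝ))
    (hP : P = {x | (∀ i, 0 ≤ x i) ∧ (A.map ((↑) : ℚ → ℝ)).mulVec x = 0 ∧
      (∀ i ∈ Z, x i = 0) ∧ 1 ≤ ∑ i, (c i : ℝ) * x i})
    (hne : P.Nonempty)
    (hmax : ∀ i ∉ Z, ¬ ∃ x ∈ P, x i = 0)
    (C : Set (Fin N → ℝ))
    (hCdef : C = {x | (∀ i, 0 ≤ x i) ∧ (A.map ((↑) : ℚ → ℝ)).mulVec x = 0}) :
    ∀ q ∈ P, ∀ a b : Fin N → ℝ, a ∈ C → b ∈ C → q = a + b →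
      (∃ μ : ℝ, 0 ≤ μ ∧ a = μ • q) ∧ (∃ ν : ℝ, 0 ≤ ν ∧ b = ν • q) :=
  stmt_8_general A c Z P hP hmax C hCdef
end
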